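/- For Φ(t) = ∫₀ᵗ F(y)/y dy with F(t) = (3/4)(√((9-t)/(1-t)) - 3), the first Taylor coefficient of the composition Φ ∘ φ_R at 0 equals 2(2R+3)/((R+1)(R+2)(R+3)), where φ_R(t) = 1 - 8/((√((9-t)/(1-t)) + 2R)² - 1). -/

import Mathlib

/-!
Away from its removable singularity, `F(y)/y = 6 / ((1 - y)(√((9-y)/(1-y)) + 3))` (rationalize the
numerator), and the right-hand side is continuous on `y < 1`. Hence `Φ' = F(y)/y` there by the
fundamental theorem of calculus, and the chain rule gives `(Φ ∘ φ_R)'(0) = Φ'(φ_R(0)) φ_R'(0)`.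
At `x₀ = φ_R(0) = 1 - 2/((R+1)(R+2))` the square root is rational, `√((9-x₀)/(1-x₀)) = 2R+3`,
which makes both factors explicit.
-/

noncomputable def Fgen (t : ℝ) : ℝ :=
  (3 / 4) * (Real.sqrt ((9 - t) / (1 - t)) - 3)

noncomputable def PhiGen (t : ℝ) : ℝ :=
  ∫ y in (0:ℝ)..t, Fgen y / y

noncomputable def psiIter (R : ℕ) (t : ℝ) : ℝ :=
  1 - 8 / ((Real.sqrt ((9 - t) / (1 - t)) + 2 * R) ^ 2 - 1)

open Set
open scoped Interval

theorem hasDerivAt_integral_of_continuousOn {E : Type*} [NormedAddCommGroup E] [NormedSpace ℝ E]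
    [CompleteSpace E] {f : ℝ → E} {U : Set ℝ} {a x : ℝ} (hU : IsOpen U) (hf : ContinuousOn f U)
    (hax : [[a, x]] ⊆ U) :
    HasDerivAt (fun u => ∫ y in a..u, f y) (f x) x := by
  have hx : x ∈ U := hax right_mem_uIcc
  exact intervalIntegral.integral_hasDerivAt_right ((hf.mono hax).intervalIntegrable)
    (hf.stronglyMeasurableAtFilter hU x hx) (hf.continuousAt (hU.mem_nhds hx))

noncomputable def sqrtRatio (t : ℝ) : ℝ :=
  √((9 - t) / (1 - t))

/-- `Fgen y / y` with its removable singularity at `0` filled in. -/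
noncomputable def FgenQuot (y : ℝ) : ℝ :=
  6 / ((1 - y) * (sqrtRatio y + 3))

theorem continuousOn_sqrtRatio : ContinuousOn sqrtRatio (Iio 1) := by
  intro t ht
  have h : (1 : ℝ) - t ≠ 0 := (sub_pos.2 ht).ne'
  exact (((continuousAt_const.sub continuousAt_id).div
    (continuousAt_const.sub continuousAt_id) h).sqrt).continuousWithinAt

theorem sqrtRatio_zero : sqrtRatio 0 = 3 := by
  rw [sqrtRatio, Real.sqrt_eq_iff_eq_sq] <;> norm_num

theorem hasDerivAt_sqrtRatio {t : ℝ} (ht : t < 1) :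
    HasDerivAt sqrtRatio (4 / ((1 - t) ^ 2 * sqrtRatio t)) t := by
  have h1 : 1 - t ≠ 0 := (sub_pos.2 ht).ne'
  have hpos : 0 < (9 - t) / (1 - t) := div_pos (by linarith) (sub_pos.2 ht)
  have hq : HasDerivAt (fun t : ℝ => (9 - t) / (1 - t)) (8 / (1 - t) ^ 2) t := by
    refine (((hasDerivAt_id t).const_sub 9).fun_div
      ((hasDerivAt_id t).const_sub 1) h1).congr_deriv ?_
    simp only [id]
    ring
  have hs : 0 < sqrtRatio t := Real.sqrt_pos.2 hpos
  refine (hq.sqrt hpos.ne').congr_deriv ?_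
  rw [← sqrtRatio]
  field_simp
  ring

theorem continuousOn_FgenQuot : ContinuousOn FgenQuot (Iio 1) := by
  refine continuousOn_const.div ((continuousOn_const.sub continuousOn_id).mul
    (continuousOn_sqrtRatio.add continuousOn_const)) fun y (hy : y < 1) => ?_
  have : 0 < 1 - y := sub_pos.2 hy
  have : 0 ≤ sqrtRatio y := Real.sqrt_nonneg _
  positivity

theorem Fgen_div_eq_FgenQuot {y : ℝ} (hy : y < 1) (h0 : y ≠ 0) : Fgen y / y = FgenQuot y := by
  have h1 : 0 < 1 - y := sub_pos.2 hy
  have hs : 0 ≤ sqrtRatio y := Real.sqrt_nonneg _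
  have hsq : (1 - y) * sqrtRatio y ^ 2 = 9 - y := by
    rw [sqrtRatio, Real.sq_sqrt (div_nonneg (by linarith) h1.le)]
    field_simp
  rw [Fgen, FgenQuot, ← sqrtRatio, div_eq_div_iff h0 (by positivity)]
  linear_combination (3 / 4) * hsq

theorem PhiGen_eq_integral_FgenQuot {t : ℝ} (ht : t < 1) :
    PhiGen t = ∫ y in (0 : ℝ)..t, FgenQuot y := by
  refine intervalIntegral.integral_congr_ae ?_
  filter_upwards [MeasureTheory.Measure.ae_ne MeasureTheory.volume 0] with y hy0 hy
  exact Fgen_div_eq_FgenQuot (hy.2.trans_lt (max_lt one_pos ht)) hy0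

theorem hasDerivAt_PhiGen {x : ℝ} (hx : x < 1) : HasDerivAt PhiGen (FgenQuot x) x := by
  have hPhi : (fun u => ∫ y in (0 : ℝ)..u, FgenQuot y) =ᶠ[nhds x] PhiGen := by
    filter_upwards [Iio_mem_nhds hx] with u hu
    exact (PhiGen_eq_integral_FgenQuot hu).symm
  have hsub : [[0, x]] ⊆ Iio 1 := fun y hy => hy.2.trans_lt (max_lt one_pos hx)
  exact (hasDerivAt_integral_of_continuousOn isOpen_Iio continuousOn_FgenQuot
    hsub).congr_of_eventuallyEq hPhi.symm

theorem psiIter_zero (R : ℕ) : psiIter R 0 = 1 - 2 / (((R : ℝ) + 1) * ((R : ℝ) + 2)) := by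
  rw [psiIter, ← sqrtRatio, sqrtRatio_zero,
    show (3 + 2 * (R : ℝ)) ^ 2 - 1 = 4 * (((R : ℝ) + 1) * ((R : ℝ) + 2)) by ring]
  field_simp
  ring

theorem psiIter_zero_lt_one (R : ℕ) : psiIter R 0 < 1 := by
  rw [psiIter_zero]
  have : 0 < 2 / (((R : ℝ) + 1) * ((R : ℝ) + 2)) := by positivity
  linarith

theorem hasDerivAt_psiIter_zero (R : ℕ) :
    HasDerivAt (psiIter R)
      (4 * (2 * (R : ℝ) + 3) / (3 * (((R : ℝ) + 1) * ((R : ℝ) + 2)) ^ 2)) 0 := by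
  have hs := hasDerivAt_sqrtRatio (t := 0) one_pos
  rw [sqrtRatio_zero] at hs
  have hv := ((hs.add_const (2 * (R : ℝ))).fun_pow 2).sub_const 1
  have hv0 : (sqrtRatio 0 + 2 * (R : ℝ)) ^ 2 - 1 = 4 * (((R : ℝ) + 1) * ((R : ℝ) + 2)) := by
    rw [sqrtRatio_zero]; ring
  refine (((hasDerivAt_const (0 : ℝ) (8 : ℝ)).fun_div hv (by rw [hv0]; positivity)).const_sub
    1).congr_deriv ?_
  rw [hv0, sqrtRatio_zero]
  field_simp
  ring

theorem sqrtRatio_psiIter_zero (R : ℕ) : sqrtRatio (psiIter R 0) = 2 * R + 3 := by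
  rw [sqrtRatio, Real.sqrt_eq_iff_eq_sq _ (by positivity), psiIter_zero]
  · field_simp
    ring
  · exact div_nonneg (by linarith [psiIter_zero_lt_one R]) (by linarith [psiIter_zero_lt_one R])

theorem FgenQuot_psiIter_zero (R : ℕ) :
    FgenQuot (psiIter R 0) = 3 * (((R : ℝ) + 1) * ((R : ℝ) + 2)) / (2 * ((R : ℝ) + 3)) := by
  rw [FgenQuot, sqrtRatio_psiIter_zero, psiIter_zero]
  field_simp
  ring

/-- The first Taylor coefficient of `Φ ∘ φ_R` at `0`, i.e. the derivative of
`t ↦ Φ(φ_R(t))` at `0`, equals `2(2R+3)/((R+1)(R+2)(R+3))`. -/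
theorem first_coeff_Phi_comp_psi (R : ℕ) :
    deriv (fun t : ℝ => PhiGen (psiIter R t)) 0 =
      2 * (2 * (R:ℝ) + 3) / (((R:ℝ) + 1) * ((R:ℝ) + 2) * ((R:ℝ) + 3)) := by
  have h := (hasDerivAt_PhiGen (psiIter_zero_lt_one R)).comp 0 (hasDerivAt_psiIter_zero R)
  rw [Function.comp_def, FgenQuot_psiIter_zero] at h
  rw [h.deriv]
  field_simp
  ring
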